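/- The infinite series (1/2) ∑_{n=1}^∞ H_n (H_n² − H_n^{(2)}) / ((n+1)(n+2)) equals 1 + ζ(2) + ζ(3). -/

import Mathlib

/-- Generalized harmonic number `H_n^{(r)} = ∑_{j=1}^n 1/j^r`. -/
noncomputable def H (n r : ℕ) : ℝ := ∑ j ∈ Finset.range n, (1 : ℝ) / (j + 1) ^ r

/-- Riemann zeta value `ζ(s) = ∑_{n=1}^∞ 1/n^s` (as a real series). -/
noncomputable def Z (s : ℕ) : ℝ := ∑' n : ℕ, (1 : ℝ) / (n + 1) ^ s

/-- Double zeta value `ζ(a,b) = ∑_{m>n≥1} 1/(m^a n^b)`. -/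
noncomputable def Z2 (a b : ℕ) : ℝ :=
  ∑' m : ℕ, (∑ j ∈ Finset.range m, (1 : ℝ) / (j + 1) ^ b) / (m + 1) ^ a

open Finset Filter Real Topology

lemma H_succ (n r : ℕ) : H (n + 1) r = H n r + 1 / ((n : ℝ) + 1) ^ r := by
  simp [H, Finset.sum_range_succ]

lemma H_nonneg (n r : ℕ) : 0 ≤ H n r := by
  apply Finset.sum_nonneg; intro j _; positivity

lemma summable_Zser {s : ℕ} (hs : 2 ≤ s) : Summable (fun n : ℕ => (1 : ℝ) / ((n : ℝ) + 1) ^ s) := by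
  have h2 : Summable (fun n : ℕ => (1 : ℝ) / ((n : ℝ) + 1) ^ 2) := by
    have := (summable_nat_add_iff (f := fun n : ℕ => (1 : ℝ) / (n : ℝ) ^ 2) 1).2
      (Real.summable_one_div_nat_pow.2 one_lt_two)
    refine this.congr fun n => ?_
    push_cast; ring_nf
  refine h2.of_nonneg_of_le (fun n => by positivity) (fun n => ?_)
  have h1 : (1:ℝ) ≤ (n:ℝ) + 1 := by linarith [Nat.cast_nonneg (α := ℝ) n]
  exact one_div_le_one_div_of_le (by positivity) (pow_le_pow_right₀ h1 hs)

lemma tendsto_H {s : ℕ} (hs : 2 ≤ s) : Tendsto (fun N => H N s) atTop (𝓝 (Z s)) := by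
  simpa [H, Z] using (summable_Zser hs).hasSum.tendsto_sum_nat

lemma H_le_log : ∀ n : ℕ, H n 1 ≤ 1 + Real.log n
  | 0 => by simp [H]
  | 1 => by norm_num [H]
  | (n+2) => by
    have ih := H_le_log (n+1)
    rw [H_succ]
    have hlog : 1 / ((n:ℝ) + 2) ≤ Real.log (n+2) - Real.log (n+1) := by
      rw [← Real.log_div (by positivity) (by positivity)]
      have := Real.log_le_sub_one_of_pos (x := ((n:ℝ)+1)/((n:ℝ)+2)) (by positivity)
      rw [Real.log_div (by positivity) (by positivity)] at this
      have h2 : Real.log (((n:ℝ)+2)/((n:ℝ)+1)) = Real.log ((n:ℝ)+2) - Real.log ((n:ℝ)+1) :=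
        Real.log_div (by positivity) (by positivity)
      have hd : ((n:ℝ)+1)/((n:ℝ)+2) - 1 = -(1/((n:ℝ)+2)) := by field_simp; ring
      linarith [this, hd]
    push_cast
    push_cast at ih
    simp only [pow_one]
    have e : (1:ℝ)/((n:ℝ)+1+1) = 1/((n:ℝ)+2) := by ring_nf
    linarith [e]

lemma one_le_H {N : ℕ} (hN : 1 ≤ N) : 1 ≤ H N 1 := by
  have : (1:ℝ) / ((0:ℕ) + 1)^1 ≤ ∑ j ∈ Finset.range N, (1:ℝ)/((j:ℝ)+1)^1 :=
    Finset.single_le_sum (f := fun j : ℕ => (1:ℝ)/((j:ℝ)+1)^1)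
      (fun j _ => by positivity) (Finset.mem_range.2 hN)
  simpa [H] using this

lemma tendsto_log_cube :
    Tendsto (fun x : ℝ => (1 + Real.log x)^3 / (x+1)) atTop (𝓝 0) := by
  have h : ∀ i : ℕ, Tendsto (fun x : ℝ => Real.log x ^ i / (1*x+1)) atTop (𝓝 0) :=
    fun i => Real.tendsto_pow_log_div_mul_add_atTop 1 1 i one_ne_zero
  have hsum : Tendsto (fun x : ℝ => Real.log x ^ 0 / (1*x+1) + 3 * (Real.log x ^ 1 / (1*x+1))
      + 3 * (Real.log x ^ 2 / (1*x+1)) + Real.log x ^ 3 / (1*x+1)) atTop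
      (𝓝 (0 + 3*0 + 3*0 + 0)) :=
    (((h 0).add ((h 1).const_mul 3)).add ((h 2).const_mul 3)).add (h 3)
  rw [show (0:ℝ) + 3*0 + 3*0 + 0 = 0 by ring] at hsum
  refine hsum.congr' ?_
  filter_upwards [eventually_ge_atTop (1:ℝ)] with x hx
  have hx1 : x + 1 ≠ 0 := by positivity
  field_simp
  ring

lemma Hpow_div_tendsto (k : ℕ) (hk : k ≤ 3) (c : ℝ) (hc : 1 ≤ c) :
    Tendsto (fun N : ℕ => (H N 1)^k / ((N:ℝ) + c)) atTop (𝓝 0) := by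
  have hlog : Tendsto (fun N : ℕ => (1 + Real.log N)^3 / ((N:ℝ)+1)) atTop (𝓝 0) :=
    tendsto_log_cube.comp tendsto_natCast_atTop_atTop
  refine squeeze_zero' ?_ ?_ hlog
  · filter_upwards [eventually_ge_atTop 1] with N _
    have := H_nonneg N 1
    positivity
  · filter_upwards [eventually_ge_atTop 1] with N hN
    have h1 : 1 ≤ H N 1 := one_le_H hN
    have h2 : H N 1 ≤ 1 + Real.log N := H_le_log N
    have hL1 : (1:ℝ) ≤ 1 + Real.log N := le_trans h1 h2
    have hnum : (H N 1)^k ≤ (1 + Real.log N)^3 :=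
      le_trans (pow_le_pow_left₀ (by linarith) h2 k) (pow_le_pow_right₀ hL1 hk)
    exact div_le_div₀ (by positivity) hnum (by positivity) (by linarith)

lemma row_tsum (m : ℕ) (hm : 1 ≤ m) :
    ∑' k : ℕ, (1:ℝ)/(((k:ℝ)+1)*((k:ℝ)+(m:ℝ)+1)) = H m 1 / (m:ℝ) := by
  have hm0 : (0:ℝ) < m := by exact_mod_cast hm
  set g : ℕ → ℝ := fun k => (1:ℝ)/(((k:ℝ)+1)*((k:ℝ)+(m:ℝ)+1)) with hg
  have hsum : Summable g := by
    refine (summable_Zser (le_refl 2)).of_nonneg_of_le (fun k => by positivity) (fun k => ?_)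
    have : ((k:ℝ)+1)^2 ≤ ((k:ℝ)+1)*((k:ℝ)+(m:ℝ)+1) := by nlinarith [Nat.cast_nonneg (α := ℝ) k]
    exact one_div_le_one_div_of_le (by positivity) this
  have key : ∀ K : ℕ, ∑ k ∈ Finset.range K, g k
      = (H m 1 - ∑ i ∈ Finset.range m, (1:ℝ)/((K:ℝ)+(i:ℝ)+1))/m := by
    intro K
    have e1 : ∀ k : ℕ, g k = ((1:ℝ)/((k:ℝ)+1) - 1/((k:ℝ)+(m:ℝ)+1))/m := by
      intro k
      have hk1 : ((k:ℝ)+1) ≠ 0 := by positivity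
      have hk2 : ((k:ℝ)+(m:ℝ)+1) ≠ 0 := by positivity
      rw [eq_div_iff hm0.ne', div_sub_div _ _ hk1 hk2, div_mul_eq_mul_div, div_eq_div_iff (by positivity) (by positivity)]
      ring
    rw [Finset.sum_congr rfl (fun k _ => e1 k), ← Finset.sum_div, Finset.sum_sub_distrib]
    congr 1
    have A := Finset.sum_range_add (f := fun i : ℕ => (1:ℝ)/((i:ℝ)+1)) m K
    have B := Finset.sum_range_add (f := fun i : ℕ => (1:ℝ)/((i:ℝ)+1)) K m
    have hc : m + K = K + m := Nat.add_comm m K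
    rw [hc] at A
    rw [A] at B
    have eA : ∑ i ∈ Finset.range K, (1:ℝ)/(((m + i : ℕ):ℝ)+1)
        = ∑ k ∈ Finset.range K, (1:ℝ)/((k:ℝ)+(m:ℝ)+1) := by
      refine Finset.sum_congr rfl (fun k _ => ?_); push_cast; ring_nf
    have eB : ∑ i ∈ Finset.range m, (1:ℝ)/(((K + i : ℕ):ℝ)+1)
        = ∑ i ∈ Finset.range m, (1:ℝ)/((K:ℝ)+(i:ℝ)+1) := by
      refine Finset.sum_congr rfl (fun k _ => ?_); push_cast; ring_nf
    simp only [eA, eB] at B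
    have hH : H m 1 = ∑ i ∈ Finset.range m, (1:ℝ)/((i:ℝ)+1) := by
      simp [H]
    have hHK : H K 1 = ∑ i ∈ Finset.range K, (1:ℝ)/((i:ℝ)+1) := by
      simp [H]
    rw [hH, hHK] at *
    linarith [B]
  have h0 : Tendsto (fun K : ℕ => ∑ i ∈ Finset.range m, (1:ℝ)/((K:ℝ)+(i:ℝ)+1)) atTop (𝓝 0) := by
    have : Tendsto (fun K : ℕ => ∑ i ∈ Finset.range m, (1:ℝ)/((K:ℝ)+(i:ℝ)+1)) atTop
        (𝓝 (∑ i ∈ Finset.range m, (0:ℝ))) := by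
      refine tendsto_finset_sum _ (fun i _ => ?_)
      have ht : Tendsto (fun K : ℕ => (K:ℝ)+(i:ℝ)+1) atTop atTop :=
        tendsto_atTop_add_const_right _ _ (tendsto_atTop_add_const_right _ _ tendsto_natCast_atTop_atTop)
      simpa [one_div, Pi.inv_def] using ht.inv_tendsto_atTop
    simpa using this
  have h1 : Tendsto (fun K : ℕ => ∑ k ∈ Finset.range K, g k) atTop (𝓝 (H m 1 / m)) := by
    simp only [key]
    have := (tendsto_const_nhds (x := H m 1) (f := atTop (α := ℕ)) |>.sub h0).div_const (m:ℝ)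
    simpa using this
  exact tendsto_nhds_unique hsum.hasSum.tendsto_sum_nat h1

lemma H_le_sqrt : ∀ n : ℕ, H n 1 ≤ 2 * Real.sqrt n := by
  intro n
  induction n with
  | zero => simp [H]
  | succ n ih =>
    rw [H_succ]
    have ha : Real.sqrt n ^ 2 = n := Real.sq_sqrt (Nat.cast_nonneg n)
    have hb : Real.sqrt (n+1) ^ 2 = (n:ℝ)+1 := by
      rw [Real.sq_sqrt (by positivity)]
    have ha0 : 0 ≤ Real.sqrt n := Real.sqrt_nonneg _
    have hb0 : 0 ≤ Real.sqrt ((n:ℝ)+1) := Real.sqrt_nonneg _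
    have hb1 : 1 ≤ Real.sqrt ((n:ℝ)+1) := by
      nlinarith [hb, hb0, Nat.cast_nonneg (α := ℝ) n]
    have hab : Real.sqrt n ≤ Real.sqrt ((n:ℝ)+1) := by
      nlinarith [ha, hb, ha0, hb0]
    have hba : (Real.sqrt ((n:ℝ)+1) - Real.sqrt n) * (Real.sqrt ((n:ℝ)+1) + Real.sqrt n) = 1 := by
      nlinarith [ha, hb]
    have key : 1 / ((n:ℝ)+1) ≤ 2 * (Real.sqrt ((n:ℝ)+1) - Real.sqrt n) := by
      rw [div_le_iff₀ (by positivity)]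
      nlinarith [hba, ha, hb, ha0, hb0, hb1, hab]
    push_cast
    simp only [pow_one]
    push_cast at ih
    linarith

lemma summable_D : Summable (fun n : ℕ => H (n+1) 1 / ((n:ℝ)+1)^2) := by
  have s1 : Summable (fun n : ℕ => ((n:ℝ)+1)^(-(3/2):ℝ)) := by
    have := (summable_nat_add_iff (f := fun n : ℕ => (n:ℝ)^(-(3/2):ℝ)) 1).2
      (Real.summable_nat_rpow.2 (by norm_num))
    refine this.congr fun n => ?_
    push_cast
    ring_nf
  refine (s1.mul_left 2).of_nonneg_of_le (fun n => div_nonneg (H_nonneg _ 1) (by positivity)) (fun n => ?_)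
  have hx : (0:ℝ) < (n:ℝ)+1 := by positivity
  have hs : Real.sqrt ((n:ℝ)+1) / ((n:ℝ)+1)^2 = ((n:ℝ)+1)^(-(3/2):ℝ) := by
    rw [Real.sqrt_eq_rpow, ← Real.rpow_natCast ((n:ℝ)+1) 2, ← Real.rpow_sub hx]
    norm_num
  have hH : H (n+1) 1 ≤ 2 * Real.sqrt ((n:ℝ)+1) := by
    have := H_le_sqrt (n+1); push_cast at this; exact this
  calc H (n+1) 1 / ((n:ℝ)+1)^2 ≤ 2 * Real.sqrt ((n:ℝ)+1) / ((n:ℝ)+1)^2 := by gcongr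
    _ = 2 * (((n:ℝ)+1)^(-(3/2):ℝ)) := by rw [mul_div_assoc, hs]

lemma summable_D' : Summable (fun n : ℕ => H (n+1) 1 / ((n:ℝ)+2)^2) := by
  refine summable_D.of_nonneg_of_le (fun n => div_nonneg (H_nonneg _ 1) (by positivity)) (fun n => ?_)
  gcongr
  · exact H_nonneg _ 1
  · linarith [Nat.cast_nonneg (α := ℝ) n]

lemma tail2 (j : ℕ) : ∑' k : ℕ, (1:ℝ)/((k:ℝ)+(j:ℝ)+2)^2 = Z 2 - H (j+1) 2 := by
  have hz2 : Summable (fun n : ℕ => (1:ℝ)/((n:ℝ)+1)^2) := summable_Zser le_rfl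
  have key := Summable.sum_add_tsum_nat_add (f := fun n : ℕ => (1:ℝ)/((n:ℝ)+1)^2) (j+1) hz2
  have e1 : ∑' (i : ℕ), (1:ℝ)/(((i + (j+1) : ℕ):ℝ)+1)^2 = ∑' k : ℕ, (1:ℝ)/((k:ℝ)+(j:ℝ)+2)^2 := by
    refine tsum_congr fun k => ?_
    push_cast
    ring_nf
  have e2 : ∑ i ∈ Finset.range (j+1), (1:ℝ)/((i:ℝ)+1)^2 = H (j+1) 2 := by simp [H]
  have e3 : ∑' (n : ℕ), (1:ℝ)/((n:ℝ)+1)^2 = Z 2 := by simp [Z]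
  rw [e1, e2, e3] at key
  linarith

noncomputable def Ffun : ℕ × ℕ → ℝ :=
  fun p => 1/(((p.1:ℝ)+1)*((p.2:ℝ)+1)*((p.1:ℝ)+(p.2:ℝ)+2))
noncomputable def Gfun : ℕ × ℕ → ℝ :=
  fun p => 1/(((p.1:ℝ)+1)*((p.1:ℝ)+(p.2:ℝ)+2)^2)
noncomputable def Vfun : ℕ × ℕ → ℝ :=
  fun p => if p.2 ≤ p.1 then 1/(((p.2:ℝ)+1)*((p.1:ℝ)+2)^2) else 0

lemma Ffun_nonneg (p : ℕ × ℕ) : 0 ≤ Ffun p := by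
  unfold Ffun; positivity

lemma Gfun_nonneg (p : ℕ × ℕ) : 0 ≤ Gfun p := by
  unfold Gfun; positivity

lemma Vfun_nonneg (p : ℕ × ℕ) : 0 ≤ Vfun p := by
  unfold Vfun
  split <;> positivity

lemma Frow_summable (j : ℕ) : Summable (fun k => Ffun (j, k)) := by
  refine (summable_Zser le_rfl).of_nonneg_of_le (fun k => Ffun_nonneg _) (fun k => ?_)
  unfold Ffun
  simp only
  refine one_div_le_one_div_of_le (by positivity) ?_
  have hk : (0:ℝ) ≤ (k:ℝ) := Nat.cast_nonneg k
  have hj : (0:ℝ) ≤ (j:ℝ) := Nat.cast_nonneg j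
  nlinarith [mul_nonneg hj hk, mul_nonneg (mul_nonneg hj hk) hk, mul_nonneg hj (mul_nonneg hk hk), mul_nonneg hj hj, mul_nonneg (mul_nonneg hj hj) hk]

lemma Frow_tsum (j : ℕ) : ∑' k : ℕ, Ffun (j, k) = H (j+1) 1 / ((j:ℝ)+1)^2 := by
  have e : ∀ k : ℕ, Ffun (j, k)
      = (1/((j:ℝ)+1)) * (1/(((k:ℝ)+1)*((k:ℝ)+((j+1:ℕ):ℝ)+1))) := by
    intro k
    unfold Ffun
    push_cast
    have h1 : ((j:ℝ)+1) ≠ 0 := by positivity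
    have h2 : ((k:ℝ)+1) ≠ 0 := by positivity
    have h3 : ((k:ℝ)+(j:ℝ)+2) ≠ 0 := by positivity
    field_simp
    ring
  rw [tsum_congr e, tsum_mul_left, row_tsum (j+1) (Nat.le_add_left 1 j)]
  push_cast
  rw [div_mul_div_comm, one_mul, sq]

lemma F_summable : Summable Ffun := by
  refine (summable_prod_of_nonneg Ffun_nonneg).2 ⟨fun j => Frow_summable j, ?_⟩
  refine summable_D.congr (fun j => ?_)
  exact (Frow_tsum j).symm

lemma F_tsum : ∑' p : ℕ × ℕ, Ffun p = ∑' n : ℕ, H (n+1) 1 / ((n:ℝ)+1)^2 := by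
  rw [Summable.tsum_prod' F_summable (fun j => Frow_summable j)]
  exact tsum_congr Frow_tsum

lemma G_le_F (p : ℕ × ℕ) : Gfun p ≤ Ffun p := by
  obtain ⟨j, k⟩ := p
  unfold Gfun Ffun
  simp only
  refine one_div_le_one_div_of_le (by positivity) ?_
  have hk : (0:ℝ) ≤ (k:ℝ) := Nat.cast_nonneg k
  have hj : (0:ℝ) ≤ (j:ℝ) := Nat.cast_nonneg j
  have h1 : ((k:ℝ)+1) ≤ ((j:ℝ)+(k:ℝ)+2) := by linarith
  have h2 : (0:ℝ) < ((j:ℝ)+1) * ((j:ℝ)+(k:ℝ)+2) := by positivity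
  nlinarith [mul_le_mul_of_nonneg_left h1 (le_of_lt h2)]

lemma G_summable : Summable Gfun := F_summable.of_nonneg_of_le Gfun_nonneg G_le_F

lemma FGG (p : ℕ × ℕ) : Ffun p = Gfun p + Gfun p.swap := by
  obtain ⟨j, k⟩ := p
  unfold Gfun Ffun
  simp only [Prod.swap_prod_mk]
  have h1 : ((j:ℝ)+1) ≠ 0 := by positivity
  have h2 : ((k:ℝ)+1) ≠ 0 := by positivity
  have h3 : ((j:ℝ)+(k:ℝ)+2) ≠ 0 := by positivity
  have h4 : ((k:ℝ)+(j:ℝ)+2) ≠ 0 := by positivity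
  field_simp
  ring

lemma G_swap_summable : Summable (fun p : ℕ × ℕ => Gfun p.swap) :=
  (Equiv.prodComm ℕ ℕ).summable_iff.2 G_summable

lemma G_swap_tsum : ∑' p : ℕ × ℕ, Gfun p.swap = ∑' p : ℕ × ℕ, Gfun p :=
  (Equiv.prodComm ℕ ℕ).tsum_eq Gfun

lemma Grow_summable (j : ℕ) : Summable (fun k => Gfun (j, k)) := by
  refine (summable_Zser le_rfl).of_nonneg_of_le (fun k => Gfun_nonneg _) (fun k => ?_)
  unfold Gfun
  simp only
  refine one_div_le_one_div_of_le (by positivity) ?_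
  have hk : (0:ℝ) ≤ (k:ℝ) := Nat.cast_nonneg k
  have hj : (0:ℝ) ≤ (j:ℝ) := Nat.cast_nonneg j
  nlinarith [mul_nonneg hj hk, mul_nonneg hj (mul_nonneg hk hk), mul_nonneg hj hj,
    mul_nonneg (mul_nonneg hj hj) hk, mul_nonneg hj (mul_nonneg hj hj)]

lemma Grow_tsum (j : ℕ) : ∑' k : ℕ, Gfun (j, k) = (1/((j:ℝ)+1)) * (Z 2 - H (j+1) 2) := by
  have e : ∀ k : ℕ, Gfun (j, k) = (1/((j:ℝ)+1)) * ((1:ℝ)/((k:ℝ)+(j:ℝ)+2)^2) := by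
    intro k
    unfold Gfun
    simp only
    rw [div_mul_div_comm, one_mul]
    ring_nf
  rw [tsum_congr e, tsum_mul_left, tail2 j]

lemma G_tsum1 : ∑' p : ℕ × ℕ, Gfun p = ∑' j : ℕ, (1/((j:ℝ)+1)) * (Z 2 - H (j+1) 2) := by
  rw [Summable.tsum_prod' G_summable Grow_summable]
  exact tsum_congr Grow_tsum

lemma Vrow_summable (n : ℕ) : Summable (fun j => Vfun (n, j)) := by
  apply summable_of_ne_finset_zero (s := Finset.range (n+1))
  intro j hj
  have : ¬ (j ≤ n) := by
    intro h; exact hj (Finset.mem_range.2 (Nat.lt_succ_of_le h))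
  simp [Vfun, this]

lemma Vrow_tsum (n : ℕ) : ∑' j : ℕ, Vfun (n, j) = H (n+1) 1 / ((n:ℝ)+2)^2 := by
  rw [tsum_eq_sum (s := Finset.range (n+1)) (fun j hj => by
    have : ¬ (j ≤ n) := fun h => hj (Finset.mem_range.2 (Nat.lt_succ_of_le h))
    simp [Vfun, this])]
  have e : ∀ j ∈ Finset.range (n+1), Vfun (n, j)
      = ((1:ℝ)/((j:ℝ)+1)^1) * ((1:ℝ)/((n:ℝ)+2)^2) := by
    intro j hj
    have : j ≤ n := Nat.lt_succ_iff.1 (Finset.mem_range.1 hj)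
    simp only [Vfun, if_pos this, pow_one]
    rw [div_mul_div_comm, one_mul]
  rw [Finset.sum_congr rfl e, ← Finset.sum_mul]
  rw [show ∑ j ∈ Finset.range (n+1), ((1:ℝ)/((j:ℝ)+1)^1) = H (n+1) 1 from by simp [H]]
  rw [mul_one_div]

lemma V_summable : Summable Vfun := by
  refine (summable_prod_of_nonneg Vfun_nonneg).2 ⟨Vrow_summable, ?_⟩
  exact summable_D'.congr (fun n => (Vrow_tsum n).symm)

lemma V_tsum1 : ∑' p : ℕ × ℕ, Vfun p = ∑' n : ℕ, H (n+1) 1 / ((n:ℝ)+2)^2 := by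
  rw [Summable.tsum_prod' V_summable Vrow_summable]
  exact tsum_congr Vrow_tsum

lemma Vcol_summable (j : ℕ) : Summable (fun n => Vfun (n, j)) := by
  refine (summable_Zser le_rfl).of_nonneg_of_le (fun n => Vfun_nonneg _) (fun n => ?_)
  unfold Vfun
  simp only
  split
  · refine one_div_le_one_div_of_le (by positivity) ?_
    have hn : (0:ℝ) ≤ (n:ℝ) := Nat.cast_nonneg n
    have hj : (0:ℝ) ≤ (j:ℝ) := Nat.cast_nonneg j
    nlinarith [mul_nonneg hj hn, mul_nonneg hj (mul_nonneg hn hn), mul_nonneg hj hj]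
  · positivity

lemma Vcol_tsum (j : ℕ) : ∑' n : ℕ, Vfun (n, j) = (1/((j:ℝ)+1)) * (Z 2 - H (j+1) 2) := by
  have key := Summable.sum_add_tsum_nat_add (f := fun n : ℕ => Vfun (n, j)) j (Vcol_summable j)
  have e0 : ∑ n ∈ Finset.range j, Vfun (n, j) = 0 := by
    refine Finset.sum_eq_zero (fun n hn => ?_)
    have : ¬ (j ≤ n) := Nat.not_le.2 (Finset.mem_range.1 hn)
    simp [Vfun, this]
  have e1 : ∑' i : ℕ, Vfun (i + j, j)
      = (1/((j:ℝ)+1)) * ∑' i : ℕ, (1:ℝ)/((i:ℝ)+(j:ℝ)+2)^2 := by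
    rw [← tsum_mul_left]
    refine tsum_congr (fun i => ?_)
    have : j ≤ i + j := Nat.le_add_left j i
    simp only [Vfun, if_pos this]
    push_cast
    rw [div_mul_div_comm, one_mul]
  rw [e0, zero_add, e1, tail2 j] at key
  exact key.symm

lemma V_tsum2 : ∑' p : ℕ × ℕ, Vfun p = ∑' j : ℕ, (1/((j:ℝ)+1)) * (Z 2 - H (j+1) 2) := by
  have hswap : Summable (fun p : ℕ × ℕ => Vfun p.swap) := V_summable.prod_symm
  have he := (Equiv.prodComm ℕ ℕ).tsum_eq (fun p : ℕ × ℕ => Vfun p.swap)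
  simp only [Equiv.prodComm_apply, Prod.swap_swap] at he
  rw [he]
  rw [Summable.tsum_prod' hswap (fun j => Vcol_summable j)]
  exact tsum_congr (fun j => Vcol_tsum j)

lemma hz3s : Summable (fun n : ℕ => (1:ℝ)/((n:ℝ)+2)^3) := by
  refine (summable_Zser le_rfl).of_nonneg_of_le (fun n => by positivity) (fun n => ?_)
  refine one_div_le_one_div_of_le (by positivity) ?_
  have hn : (0:ℝ) ≤ (n:ℝ) := Nat.cast_nonneg n
  nlinarith [mul_nonneg hn hn, mul_nonneg hn (mul_nonneg hn hn)]

lemma hz3' : ∑' n : ℕ, (1:ℝ)/((n:ℝ)+2)^3 = Z 3 - 1 := by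
  have key := Summable.sum_add_tsum_nat_add (f := fun n : ℕ => (1:ℝ)/((n:ℝ)+1)^3) 1
    (summable_Zser (by norm_num))
  have e1 : ∑ i ∈ Finset.range 1, (1:ℝ)/((i:ℝ)+1)^3 = 1 := by norm_num
  have e2 : ∑' i : ℕ, (1:ℝ)/(((i+1:ℕ):ℝ)+1)^3 = ∑' n : ℕ, (1:ℝ)/((n:ℝ)+2)^3 := by
    refine tsum_congr fun n => ?_
    push_cast
    ring_nf
  have e3 : ∑' n : ℕ, (1:ℝ)/((n:ℝ)+1)^3 = Z 3 := by simp [Z]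
  rw [e1, e2, e3] at key
  linarith

lemma euler_sum : ∑' n : ℕ, H (n+1) 1 / ((n:ℝ)+1)^2 = 2 * Z 3 := by
  have hFG : ∑' p : ℕ × ℕ, Ffun p = 2 * ∑' p : ℕ × ℕ, Gfun p := by
    rw [tsum_congr FGG, Summable.tsum_add G_summable G_swap_summable, G_swap_tsum]
    ring
  have hGD' : ∑' p : ℕ × ℕ, Gfun p = ∑' n : ℕ, H (n+1) 1 / ((n:ℝ)+2)^2 := by
    rw [G_tsum1, ← V_tsum2, V_tsum1]
  have hDD' : ∑' n : ℕ, H (n+1) 1 / ((n:ℝ)+1)^2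
      = 2 * ∑' n : ℕ, H (n+1) 1 / ((n:ℝ)+2)^2 := by
    rw [← F_tsum, hFG, hGD']
  have key := Summable.sum_add_tsum_nat_add (f := fun n : ℕ => H (n+1) 1 / ((n:ℝ)+1)^2) 1 summable_D
  have e1 : ∑ i ∈ Finset.range 1, H (i+1) 1 / ((i:ℝ)+1)^2 = 1 := by
    norm_num [H]
  have e2 : ∑' i : ℕ, H (i+1+1) 1 / (((i+1:ℕ):ℝ)+1)^2
      = (∑' n : ℕ, H (n+1) 1 / ((n:ℝ)+2)^2) + ∑' n : ℕ, (1:ℝ)/((n:ℝ)+2)^3 := by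
    rw [← Summable.tsum_add summable_D' hz3s]
    refine tsum_congr fun n => ?_
    rw [H_succ (n+1) 1]
    push_cast
    have h2 : ((n:ℝ)+2) ≠ 0 := by positivity
    field_simp
    ring
  rw [e1, e2, hz3'] at key
  linarith

noncomputable def Dp (N : ℕ) : ℝ := ∑ n ∈ Finset.range N, H (n+1) 1 / ((n:ℝ)+1)^2

lemma Dp_succ (N : ℕ) : Dp (N+1) = Dp N + H (N+1) 1 / ((N:ℝ)+1)^2 := by
  simp [Dp, Finset.sum_range_succ]

lemma key_id (N : ℕ) :
    ∑ n ∈ Finset.range N,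
        H (n+1) 1 * (H (n+1) 1 ^ 2 - H (n+1) 2) / (((n:ℝ)+2)*((n:ℝ)+3))
      = 2 + 2 * H N 2 - 2 * H N 3 + 2 * Dp N
        - (2 + 4 * H N 1 + 3 * (H N 1)^2 - H N 2)/((N:ℝ)+1)
        + (H N 1 * H N 2 - (H N 1)^3)/((N:ℝ)+2) := by
  induction N with
  | zero => norm_num [H, Dp]
  | succ N ih =>
    rw [Finset.sum_range_succ, ih, Dp_succ, H_succ N 1, H_succ N 2, H_succ N 3]
    push_cast
    have h1 : ((N:ℝ)+1) ≠ 0 := by positivity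
    have h2 : ((N:ℝ)+2) ≠ 0 := by positivity
    have h3 : ((N:ℝ)+3) ≠ 0 := by positivity
    field_simp
    ring

lemma H2_le_sq (n : ℕ) : H n 2 ≤ (H n 1)^2 := by
  induction n with
  | zero => simp [H]
  | succ n ih =>
    rw [H_succ, H_succ]
    simp only [pow_one]
    have ha : (0:ℝ) ≤ 1/((n:ℝ)+1) := by positivity
    have hH := H_nonneg n 1
    have e : (1/((n:ℝ)+1))^2 = 1/((n:ℝ)+1)^2 := by
      rw [div_pow, one_pow]
    nlinarith [mul_nonneg hH ha, e]


theorem stmt7 :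
    (1 / 2 : ℝ) * ∑' n : ℕ,
      H (n + 1) 1 * (H (n + 1) 1 ^ 2 - H (n + 1) 2) / (((n : ℝ) + 2) * ((n : ℝ) + 3)) =
      1 + Z 2 + Z 3 := by
  set f : ℕ → ℝ := fun n =>
    H (n + 1) 1 * (H (n + 1) 1 ^ 2 - H (n + 1) 2) / (((n : ℝ) + 2) * ((n : ℝ) + 3)) with hf
  have hf_nonneg : ∀ n, 0 ≤ f n := by
    intro n
    have h1 := H_nonneg (n+1) 1
    have h2 : H (n+1) 2 ≤ (H (n+1) 1)^2 := H2_le_sq (n+1)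
    have : (0:ℝ) ≤ H (n + 1) 1 * (H (n + 1) 1 ^ 2 - H (n + 1) 2) := by nlinarith
    positivity
  -- limit of partial sums
  have hD : Tendsto Dp atTop (𝓝 (2 * Z 3)) := by
    have := summable_D.hasSum.tendsto_sum_nat
    rw [euler_sum] at this
    exact this
  have e0 : Tendsto (fun N : ℕ => 1/((N:ℝ)+1)) atTop (𝓝 0) :=
    tendsto_one_div_add_atTop_nhds_zero_nat
  have hH2 := tendsto_H (le_refl 2)
  have hH3 := tendsto_H (show 2 ≤ 3 by norm_num)
  have hP1 := Hpow_div_tendsto 1 (by norm_num) 1 le_rfl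
  have hP2 := Hpow_div_tendsto 2 (by norm_num) 1 le_rfl
  have hP12 := Hpow_div_tendsto 1 (by norm_num) 2 (by norm_num)
  have hP32 := Hpow_div_tendsto 3 (by norm_num) 2 (by norm_num)
  have hlim : Tendsto (fun N => ∑ n ∈ Finset.range N, f n) atTop
      (𝓝 (2 + 2 * Z 2 - 2 * Z 3 + 2 * (2 * Z 3)
        - (2 * 0 + 4 * 0 + 3 * 0 - Z 2 * 0) + (Z 2 * 0 - 0))) := by
    have b1 := (tendsto_const_nhds (x := (2:ℝ)) (f := atTop (α := ℕ))).add (hH2.const_mul 2)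
    have b2 := (b1.sub (hH3.const_mul 2)).add (hD.const_mul 2)
    have b3 := ((e0.const_mul 2).add (hP1.const_mul 4)).add (hP2.const_mul 3)
    have b4 := b3.sub (hH2.mul e0)
    have big := (b2.sub b4).add ((hH2.mul hP12).sub hP32)
    refine big.congr (fun N => ?_)
    rw [key_id N]
    ring
  have hsummable : Summable f := by
    refine (summable_iff_not_tendsto_nat_atTop_of_nonneg hf_nonneg).2 ?_
    exact hlim.not_tendsto (disjoint_nhds_atTop _)
  have := tendsto_nhds_unique hsummable.hasSum.tendsto_sum_nat hlim
  rw [this]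
  ring
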